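/- arXiv:2505.00791 — 6 statements merged into one kernel-verified Lean document; each statement's English description precedes it below -/
import Mathlib

section
/- Let N be a positive integer, let A be an N×N complex matrix, and let Θ be an N×N positive-definite Hermitian complex matrix such that Aᴴ Θ = Θ A, where ᴴ denotes conjugate transpose. Then every eigenvalue of A is real, i.e., the spectrum of A (as a subset of ℂ) is contained in the range of the embedding of ℝ into ℂ. -/
/-!
If `A v = μ v` with `v ≠ 0`, evaluating `v* (Aᴴ Θ) v = v* (Θ A) v` gives
`conj μ · v* Θ v = μ · v* Θ v`, and `v* Θ v > 0` because `Θ` is positive definite.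
-/

open scoped ComplexOrder
open Matrix

namespace Matrix

theorem exists_mulVec_eq_smul_of_mem_spectrum {K n : Type*} [Field K] [Fintype n]
    [DecidableEq n] {A : Matrix n n K} {μ : K} (hμ : μ ∈ spectrum K A) :
    ∃ v ≠ 0, A *ᵥ v = μ • v := by
  rw [← spectrum_toLin', ← Module.End.hasEigenvalue_iff_mem_spectrum] at hμ
  obtain ⟨v, hv⟩ := hμ.exists_hasEigenvector
  exact ⟨v, hv.2, by simpa using hv.apply_eq_smul⟩

theorem star_dotProduct_conjTranspose_mul_mulVec {R m n k : Type*} [CommSemiring R] [StarRing R]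
    [Fintype m] [Fintype n] [Fintype k] (A : Matrix m n R) (B : Matrix m k R) (v : n → R)
    (w : k → R) : star v ⬝ᵥ (Aᴴ * B) *ᵥ w = star (A *ᵥ v) ⬝ᵥ B *ᵥ w := by
  rw [← mulVec_mulVec, dotProduct_mulVec, ← star_mulVec]

theorem PosDef.star_eq_of_conjTranspose_mul_eq_mul {𝕜 n : Type*} [RCLike 𝕜] [Fintype n]
    [DecidableEq n] {A Θ : Matrix n n 𝕜} (hΘ : Θ.PosDef) (h : Aᴴ * Θ = Θ * A) {μ : 𝕜}
    (hμ : μ ∈ spectrum 𝕜 A) : star μ = μ := by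
  obtain ⟨v, hv, hAv⟩ := exists_mulVec_eq_smul_of_mem_spectrum hμ
  have hpos : 0 < star v ⬝ᵥ Θ *ᵥ v := hΘ.dotProduct_mulVec_pos hv
  refine mul_right_cancel₀ hpos.ne' ?_
  calc star μ * (star v ⬝ᵥ Θ *ᵥ v) = star v ⬝ᵥ (Aᴴ * Θ) *ᵥ v := by
        rw [star_dotProduct_conjTranspose_mul_mulVec, hAv, star_smul, smul_dotProduct,
          smul_eq_mul]
    _ = star v ⬝ᵥ (Θ * A) *ᵥ v := by rw [h]
    _ = μ * (star v ⬝ᵥ Θ *ᵥ v) := by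
        rw [← mulVec_mulVec, hAv, mulVec_smul, dotProduct_smul, smul_eq_mul]

end Matrix

theorem quasiHermitian_spectrum_real_general (N : ℕ)
    (A Θ : Matrix (Fin N) (Fin N) ℂ)
    (hΘpos : Θ.PosDef)
    (h : Aᴴ * Θ = Θ * A) :
    spectrum ℂ A ⊆ Set.range ((↑) : ℝ → ℂ) := by
  intro μ hμ
  obtain ⟨r, hr⟩ := Complex.conj_eq_iff_real.mp (hΘpos.star_eq_of_conjTranspose_mul_eq_mul h hμ)
  exact ⟨r, hr.symm⟩

/-- If `A` is quasi-Hermitian with respect to a positive-definite Hermitian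
metric `Θ` (i.e. `Aᴴ Θ = Θ A`), then the spectrum of `A` is real. -/
theorem quasiHermitian_spectrum_real (N : ℕ) (hN : 0 < N)
    (A Θ : Matrix (Fin N) (Fin N) ℂ)
    (hΘherm : Θ.IsHermitian) (hΘpos : Θ.PosDef)
    (h : Aᴴ * Θ = Θ * A) :
    spectrum ℂ A ⊆ Set.range ((↑) : ℝ → ℂ) :=
  quasiHermitian_spectrum_real_general N A Θ hΘpos h
end

section
/- Let N be a positive integer, let A be an N×N complex matrix, let Ω be an invertible N×N complex matrix, and suppose Ω A Ω⁻¹ = diag(a₁,…,a_N) is a diagonal matrix with real diagonal entries. Then for every function c : Fin N → ℝ with c(n) > 0 for all n, the matrix Θ(c) = Ωᴴ · diag(c(1)²,…,c(N)²) · Ω is a positive-definite Hermitian matrix satisfying Aᴴ Θ(c) = Θ(c) A. -/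
open scoped ComplexOrder
open Matrix

/-!
Since `Ω` is invertible, `Θ(c) = Ωᴴ diag(c²) Ω` is a congruence transform of the positive diagonal
matrix `diag(c²)`, hence positive definite. For the intertwining relation, `Ω A = D Ω` with
`D = diag(a)` gives `Aᴴ Ωᴴ = Ωᴴ Dᴴ`, and `Dᴴ = D` commutes with `diag(c²)`; so `Aᴴ` can be moved
through `Θ(c)` past its three factors, turning into `A` on the other side.
-/

theorem star_mul_conj_eq_conj_mul {M : Type*} [Monoid M] [StarMul M] {Ω A D C : M}
    (hΩ : Ω * A = D * Ω) (hC : star D * C = C * D) :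
    star A * (star Ω * C * Ω) = star Ω * C * Ω * A := by
  have hΩ' : star A * star Ω = star Ω * star D := by rw [← star_mul, hΩ, star_mul]
  calc star A * (star Ω * C * Ω) = star Ω * (star D * C) * Ω := by
        simp only [← mul_assoc, hΩ']
    _ = star Ω * C * (Ω * A) := by rw [hC, hΩ]; simp only [mul_assoc]
    _ = star Ω * C * Ω * A := by simp only [mul_assoc]

theorem rescaled_metric_posDef_and_quasiHermitian_general (N : ℕ)
    (A Ω : Matrix (Fin N) (Fin N) ℂ) (hΩ : IsUnit Ω) (a : Fin N → ℝ)
    (hdiag : Ω * A * Ω⁻¹ = Matrix.diagonal fun n => (a n : ℂ))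
    (c : Fin N → ℝ) (hc : ∀ n, 0 < c n) :
    (Ωᴴ * Matrix.diagonal (fun n => ((c n : ℂ)) ^ 2) * Ω).IsHermitian ∧
    (Ωᴴ * Matrix.diagonal (fun n => ((c n : ℂ)) ^ 2) * Ω).PosDef ∧
    Aᴴ * (Ωᴴ * Matrix.diagonal (fun n => ((c n : ℂ)) ^ 2) * Ω) =
      (Ωᴴ * Matrix.diagonal (fun n => ((c n : ℂ)) ^ 2) * Ω) * A := by
  have hweights : (diagonal fun n => ((c n : ℂ)) ^ 2).PosDef :=
    .diagonal fun n => by exact_mod_cast pow_pos (hc n) 2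
  have hmetric : (Ωᴴ * diagonal (fun n => ((c n : ℂ)) ^ 2) * Ω).PosDef :=
    hweights.conjTranspose_mul_mul_same (mulVec_injective_iff_isUnit.mpr hΩ)
  have hintertwine : Ω * A = diagonal (fun n => (a n : ℂ)) * Ω := by
    rw [← hdiag, nonsing_inv_mul_cancel_right _ _ ((isUnit_iff_isUnit_det Ω).mp hΩ)]
  have hreal : (diagonal fun n => (a n : ℂ))ᴴ = diagonal fun n => (a n : ℂ) := by
    simp [diagonal_conjTranspose]
  refine ⟨hmetric.isHermitian, hmetric, ?_⟩
  simpa only [star_eq_conjTranspose] using star_mul_conj_eq_conj_mul hintertwine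
    (by rw [star_eq_conjTranspose, hreal]; exact (commute_diagonal _ _).eq)

/-- If `Ω A Ω⁻¹` is diagonal with real entries, then for every positive
rescaling `c` the matrix `Θ(c) = Ωᴴ diag(c²) Ω` is a positive-definite
Hermitian metric with respect to which `A` is quasi-Hermitian. -/
theorem rescaled_metric_posDef_and_quasiHermitian (N : ℕ) (hN : 0 < N)
    (A Ω : Matrix (Fin N) (Fin N) ℂ) (hΩ : IsUnit Ω) (a : Fin N → ℝ)
    (hdiag : Ω * A * Ω⁻¹ = Matrix.diagonal fun n => (a n : ℂ))
    (c : Fin N → ℝ) (hc : ∀ n, 0 < c n) :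
    (Ωᴴ * Matrix.diagonal (fun n => ((c n : ℂ)) ^ 2) * Ω).IsHermitian ∧
    (Ωᴴ * Matrix.diagonal (fun n => ((c n : ℂ)) ^ 2) * Ω).PosDef ∧
    Aᴴ * (Ωᴴ * Matrix.diagonal (fun n => ((c n : ℂ)) ^ 2) * Ω) =
      (Ωᴴ * Matrix.diagonal (fun n => ((c n : ℂ)) ^ 2) * Ω) * A :=
  rescaled_metric_posDef_and_quasiHermitian_general N A Ω hΩ a hdiag c hc
end

section
/- Let N be a positive integer and let A₁, A₂ be N×N complex matrices. Suppose there exist invertible N×N complex matrices Ω₁, Ω₂ and diagonal matrices 𝔞₁, 𝔞₂ with real, pairwise distinct diagonal entries such that Ω₁ A₁ Ω₁⁻¹ = 𝔞₁ and Ω₂ A₂ Ω₂⁻¹ = 𝔞₂. Then there exists a positive-definite Hermitian N×N matrix Θ with A₁ᴴ Θ = Θ A₁ and A₂ᴴ Θ = Θ A₂ if and only if there exist functions d₁, d₂ : Fin N → ℝ with d₁(n) > 0 and d₂(n) > 0 for all n such that Ω₁ᴴ · diag(d₁) · Ω₁ = Ω₂ᴴ · diag(d₂) · Ω₂. -/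
open scoped ComplexOrder
open Matrix

/-!
Write a candidate metric as `Θ = Ωᴴ S Ω`. For `A = Ω⁻¹ 𝔞 Ω` with `𝔞` real diagonal, the
condition `Aᴴ Θ = Θ A` becomes `𝔞 S = S 𝔞`, and since the entries of `𝔞` are distinct this
forces `S` to be diagonal; `Θ` is then positive definite exactly when the diagonal of `S` is
positive. Hence the metrics of each `A_j` are exactly the `Ω_jᴴ 𝔠_j² Ω_j`, and a shared metric
is a common member of the two families.
-/

namespace Matrix

variable {n : Type*} [DecidableEq n]

theorem PosDef.exists_diagonal_ofReal_of_isDiag {𝕜 : Type*} [RCLike 𝕜] {S : Matrix n n 𝕜}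
    (hS : S.PosDef) (hdiag : S.IsDiag) :
    ∃ d : n → ℝ, (∀ i, 0 < d i) ∧ S = diagonal fun i => (d i : 𝕜) := by
  rw [← hdiag.diagonal_diag, posDef_diagonal_iff] at hS
  choose d hd hdS using fun i => RCLike.pos_iff_exists_ofReal.1 (hS i)
  refine ⟨d, hd, ?_⟩
  rw [← hdiag.diagonal_diag]
  exact congrArg diagonal (funext fun i => (hdS i).symm)

variable [Fintype n]

theorem isDiag_of_commute_diagonal {R : Type*} [CommRing R] [NoZeroDivisors R]
    {d : n → R} (hd : Function.Injective d) {S : Matrix n n R} (h : Commute (diagonal d) S) :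
    S.IsDiag := by
  intro i j hij
  have hentry : d i * S i j = S i j * d j := by
    simpa [diagonal_mul, mul_diagonal] using congrFun (congrFun h.eq i) j
  have hsub : (d i - d j) * S i j = 0 := by rw [sub_mul, hentry]; ring
  exact (mul_eq_zero.1 hsub).resolve_left (sub_ne_zero.2 (hd.ne hij))

theorem conjTranspose_mul_conj_eq_conj_mul_iff_commute {R : Type*} [CommRing R]
    [StarRing R] {Ω A D : Matrix n n R} (hΩ : IsUnit Ω) (hD : D.IsHermitian) (hA : Ω * A * Ω⁻¹ = D)
    (S : Matrix n n R) : Aᴴ * (Ωᴴ * S * Ω) = Ωᴴ * S * Ω * A ↔ Commute D S := by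
  have hdet : IsUnit Ω.det := (isUnit_iff_isUnit_det Ω).1 hΩ
  have hA' : A = Ω⁻¹ * D * Ω := by
    rw [← hA, Matrix.mul_assoc, nonsing_inv_mul_cancel_right _ _ hdet,
      nonsing_inv_mul_cancel_left _ _ hdet]
  have hleft : Aᴴ * (Ωᴴ * S * Ω) = Ωᴴ * (D * S) * Ω := by
    rw [hA', conjTranspose_mul, conjTranspose_mul, hD.eq, conjTranspose_nonsing_inv]
    simp only [Matrix.mul_assoc]
    rw [nonsing_inv_mul_cancel_left _ _
      ((isUnit_iff_isUnit_det _).1 ((isUnit_conjTranspose Ω).2 hΩ))]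
  have hright : Ωᴴ * S * Ω * A = Ωᴴ * (S * D) * Ω := by
    rw [hA']
    simp only [Matrix.mul_assoc]
    rw [mul_nonsing_inv_cancel_left _ _ hdet]
  rw [hleft, hright, hΩ.mul_left_inj, ((isUnit_conjTranspose Ω).2 hΩ).mul_right_inj]
  rfl

theorem conjTranspose_mul_conj_nonsing_inv {K : Type*} [Field K] [StarRing K]
    {Ω : Matrix n n K} (hΩ : IsUnit Ω) (Θ : Matrix n n K) : Ωᴴ * ((Ω⁻¹)ᴴ * Θ * Ω⁻¹) * Ω = Θ := by
  have hdet : IsUnit Ω.det := (isUnit_iff_isUnit_det Ω).1 hΩ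
  have hdetH : IsUnit Ωᴴ.det := (isUnit_iff_isUnit_det _).1 ((isUnit_conjTranspose Ω).2 hΩ)
  rw [conjTranspose_nonsing_inv, Matrix.mul_assoc, Matrix.mul_assoc, nonsing_inv_mul _ hdet,
    Matrix.mul_one, mul_nonsing_inv_cancel_left _ _ hdetH]

theorem posDef_and_conjTranspose_mul_eq_mul_iff {𝕜 : Type*} [RCLike 𝕜]
    {Ω A : Matrix n n 𝕜} (hΩ : IsUnit Ω) {a : n → ℝ} (ha : Function.Injective a)
    (hA : Ω * A * Ω⁻¹ = diagonal fun i => (a i : 𝕜)) (Θ : Matrix n n 𝕜) :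
    Θ.PosDef ∧ Aᴴ * Θ = Θ * A ↔
      ∃ d : n → ℝ, (∀ i, 0 < d i) ∧ Θ = Ωᴴ * diagonal (fun i => (d i : 𝕜)) * Ω := by
  have hD : (diagonal fun i => (a i : 𝕜)).IsHermitian :=
    isHermitian_diagonal_of_self_adjoint _ (funext fun i => RCLike.conj_ofReal (a i))
  constructor
  · rintro ⟨hΘ, hq⟩
    rw [← conjTranspose_mul_conj_nonsing_inv hΩ Θ] at hq ⊢
    have hS : ((Ω⁻¹)ᴴ * Θ * Ω⁻¹).PosDef :=
      hΘ.conjTranspose_mul_mul_same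
        (mulVec_injective_iff_isUnit.2 (isUnit_nonsing_inv_iff.2 hΩ))
    have hcomm := (conjTranspose_mul_conj_eq_conj_mul_iff_commute hΩ hD hA _).1 hq
    obtain ⟨d, hd, hSd⟩ := hS.exists_diagonal_ofReal_of_isDiag
      (isDiag_of_commute_diagonal (RCLike.ofReal_injective.comp ha) hcomm)
    exact ⟨d, hd, by rw [hSd]⟩
  · rintro ⟨d, hd, rfl⟩
    exact ⟨(PosDef.diagonal fun i => RCLike.ofReal_pos.2 (hd i)).conjTranspose_mul_mul_same
        (mulVec_injective_iff_isUnit.2 hΩ),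
      (conjTranspose_mul_conj_eq_conj_mul_iff_commute hΩ hD hA _).2 (commute_diagonal _ _)⟩

end Matrix

theorem compatibility_iff_shared_rescaled_metric_general (N : ℕ)
    (A₁ A₂ Ω₁ Ω₂ : Matrix (Fin N) (Fin N) ℂ)
    (hΩ₁ : IsUnit Ω₁) (hΩ₂ : IsUnit Ω₂) (a₁ a₂ : Fin N → ℝ)
    (ha₁ : Function.Injective a₁) (ha₂ : Function.Injective a₂)
    (h₁ : Ω₁ * A₁ * Ω₁⁻¹ = Matrix.diagonal fun n => (a₁ n : ℂ))
    (h₂ : Ω₂ * A₂ * Ω₂⁻¹ = Matrix.diagonal fun n => (a₂ n : ℂ)) :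
    (∃ Θ : Matrix (Fin N) (Fin N) ℂ, Θ.IsHermitian ∧ Θ.PosDef ∧
      A₁ᴴ * Θ = Θ * A₁ ∧ A₂ᴴ * Θ = Θ * A₂) ↔
    (∃ d₁ d₂ : Fin N → ℝ, (∀ n, 0 < d₁ n) ∧ (∀ n, 0 < d₂ n) ∧
      Ω₁ᴴ * Matrix.diagonal (fun n => (d₁ n : ℂ)) * Ω₁ =
        Ω₂ᴴ * Matrix.diagonal (fun n => (d₂ n : ℂ)) * Ω₂) := by
  have metric₁ := posDef_and_conjTranspose_mul_eq_mul_iff hΩ₁ ha₁ h₁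
  have metric₂ := posDef_and_conjTranspose_mul_eq_mul_iff hΩ₂ ha₂ h₂
  constructor
  · rintro ⟨Θ, -, hΘ, hq₁, hq₂⟩
    obtain ⟨d₁, hd₁, hΘ₁⟩ := (metric₁ Θ).1 ⟨hΘ, hq₁⟩
    obtain ⟨d₂, hd₂, hΘ₂⟩ := (metric₂ Θ).1 ⟨hΘ, hq₂⟩
    exact ⟨d₁, d₂, hd₁, hd₂, hΘ₁.symm.trans hΘ₂⟩
  · rintro ⟨d₁, d₂, hd₁, hd₂, heq⟩
    obtain ⟨hΘ, hq₁⟩ := (metric₁ _).2 ⟨d₁, hd₁, rfl⟩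
    exact ⟨_, hΘ.isHermitian, hΘ, hq₁, ((metric₂ _).2 ⟨d₂, hd₂, heq⟩).2⟩

/-- Lemma 1 of the paper: two candidates `A₁`, `A₂`, each diagonalizable with
real non-degenerate spectrum, admit a shared positive-definite Hermitian
metric iff the two families of metrics intersect. -/
theorem compatibility_iff_shared_rescaled_metric (N : ℕ) (hN : 0 < N)
    (A₁ A₂ Ω₁ Ω₂ : Matrix (Fin N) (Fin N) ℂ)
    (hΩ₁ : IsUnit Ω₁) (hΩ₂ : IsUnit Ω₂) (a₁ a₂ : Fin N → ℝ)
    (ha₁ : Function.Injective a₁) (ha₂ : Function.Injective a₂)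
    (h₁ : Ω₁ * A₁ * Ω₁⁻¹ = Matrix.diagonal fun n => (a₁ n : ℂ))
    (h₂ : Ω₂ * A₂ * Ω₂⁻¹ = Matrix.diagonal fun n => (a₂ n : ℂ)) :
    (∃ Θ : Matrix (Fin N) (Fin N) ℂ, Θ.IsHermitian ∧ Θ.PosDef ∧
      A₁ᴴ * Θ = Θ * A₁ ∧ A₂ᴴ * Θ = Θ * A₂) ↔
    (∃ d₁ d₂ : Fin N → ℝ, (∀ n, 0 < d₁ n) ∧ (∀ n, 0 < d₂ n) ∧
      Ω₁ᴴ * Matrix.diagonal (fun n => (d₁ n : ℂ)) * Ω₁ =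
        Ω₂ᴴ * Matrix.diagonal (fun n => (d₂ n : ℂ)) * Ω₂) :=
  compatibility_iff_shared_rescaled_metric_general N A₁ A₂ Ω₁ Ω₂ hΩ₁ hΩ₂ a₁ a₂ ha₁ ha₂ h₁ h₂
end

section
/- Let N be a positive integer, let Ω₁ and Ω₂ be invertible N×N complex matrices, set M = Ω₁ Ω₂⁻¹, and let c₁, c₂ : Fin N → ℝ be functions with c₁(n) > 0 and c₂(n) > 0 for all n, regarded as diagonal matrices 𝔠₁ = diag(c₁) and 𝔠₂ = diag(c₂). Then the matrix 𝒰 = 𝔠₁ · M · 𝔠₂⁻¹ is unitary (𝒰ᴴ 𝒰 = I) if and only if Ω₁ᴴ · 𝔠₁² · Ω₁ = Ω₂ᴴ · 𝔠₂² · Ω₂. -/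
open Matrix

/-! With `A = 𝔠₁ Ω₁` and `B = 𝔠₂ Ω₂` we have `𝒰 = A B⁻¹`, and `A B⁻¹` is unitary exactly when
`Aᴴ A = Bᴴ B`; since `𝔠ⱼ` is real diagonal, `Aᴴ A = Ω₁ᴴ 𝔠₁² Ω₁` and `Bᴴ B = Ω₂ᴴ 𝔠₂² Ω₂`. -/

theorem Matrix.conjTranspose_mul_self_mul_inv_eq_one_iff {n α : Type*} [Fintype n]
    [DecidableEq n] [CommRing α] [StarRing α] (A : Matrix n n α) {B : Matrix n n α}
    (hB : IsUnit B) :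
    (A * B⁻¹)ᴴ * (A * B⁻¹) = 1 ↔ Aᴴ * A = Bᴴ * B := by
  have hBdet : IsUnit B.det := (isUnit_iff_isUnit_det B).mp hB
  have hA : A * B⁻¹ * B = A := by rw [mul_assoc, nonsing_inv_mul B hBdet, mul_one]
  calc (A * B⁻¹)ᴴ * (A * B⁻¹) = 1
      ↔ Bᴴ * ((A * B⁻¹)ᴴ * (A * B⁻¹)) * B = Bᴴ * 1 * B := by
        rw [(((isUnit_conjTranspose B).mpr hB).mul_right_inj).symm, hB.mul_left_inj]
    _ ↔ Aᴴ * A = Bᴴ * B := by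
        rw [mul_one, ← mul_assoc, ← conjTranspose_mul, mul_assoc, hA]

theorem Matrix.conjTranspose_mul_self_diagonal_ofReal_mul {m n : Type*} [DecidableEq n]
    [Fintype n] (c : n → ℝ) (X : Matrix n m ℂ) :
    (diagonal (fun i => (c i : ℂ)) * X)ᴴ * (diagonal (fun i => (c i : ℂ)) * X) =
      Xᴴ * diagonal (fun i => (c i : ℂ) ^ 2) * X := by
  simp only [conjTranspose_mul, diagonal_conjTranspose, Pi.star_def, Complex.star_def,
    Complex.conj_ofReal]
  rw [Matrix.mul_assoc, ← Matrix.mul_assoc (diagonal _), diagonal_mul_diagonal,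
    ← Matrix.mul_assoc]
  simp only [sq]

theorem unitary_iff_shared_metric_general (N : ℕ)
    (Ω₁ Ω₂ : Matrix (Fin N) (Fin N) ℂ)
    (hΩ₂ : IsUnit Ω₂) (c₁ c₂ : Fin N → ℝ)
    (hc₂ : ∀ n, 0 < c₂ n) :
    (Matrix.diagonal (fun n => (c₁ n : ℂ)) * (Ω₁ * Ω₂⁻¹) *
        (Matrix.diagonal fun n => (c₂ n : ℂ))⁻¹)ᴴ *
      (Matrix.diagonal (fun n => (c₁ n : ℂ)) * (Ω₁ * Ω₂⁻¹) *
        (Matrix.diagonal fun n => (c₂ n : ℂ))⁻¹) = 1 ↔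
    Ω₁ᴴ * Matrix.diagonal (fun n => ((c₁ n : ℂ)) ^ 2) * Ω₁ =
      Ω₂ᴴ * Matrix.diagonal (fun n => ((c₂ n : ℂ)) ^ 2) * Ω₂ := by
  have hD₂ : IsUnit (diagonal fun n => (c₂ n : ℂ)) :=
    isUnit_diagonal.mpr <| Pi.isUnit_iff.mpr fun n =>
      isUnit_iff_ne_zero.mpr (Complex.ofReal_ne_zero.mpr (hc₂ n).ne')
  have hU : diagonal (fun n => (c₁ n : ℂ)) * (Ω₁ * Ω₂⁻¹) * (diagonal fun n => (c₂ n : ℂ))⁻¹ =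
      diagonal (fun n => (c₁ n : ℂ)) * Ω₁ * (diagonal (fun n => (c₂ n : ℂ)) * Ω₂)⁻¹ := by
    simp only [Matrix.mul_inv_rev, mul_assoc]
  rw [hU, conjTranspose_mul_self_mul_inv_eq_one_iff _ (hD₂.mul hΩ₂),
    conjTranspose_mul_self_diagonal_ofReal_mul, conjTranspose_mul_self_diagonal_ofReal_mul]

/-- Lemma 2 of the paper: with `M = Ω₁ Ω₂⁻¹` and positive diagonal matrices
`𝔠₁ = diag c₁`, `𝔠₂ = diag c₂`, the matrix `𝒰 = 𝔠₁ M 𝔠₂⁻¹` is unitary iff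
`Ω₁ᴴ 𝔠₁² Ω₁ = Ω₂ᴴ 𝔠₂² Ω₂`. -/
theorem unitary_iff_shared_metric (N : ℕ) (hN : 0 < N)
    (Ω₁ Ω₂ : Matrix (Fin N) (Fin N) ℂ)
    (hΩ₁ : IsUnit Ω₁) (hΩ₂ : IsUnit Ω₂) (c₁ c₂ : Fin N → ℝ)
    (hc₁ : ∀ n, 0 < c₁ n) (hc₂ : ∀ n, 0 < c₂ n) :
    (Matrix.diagonal (fun n => (c₁ n : ℂ)) * (Ω₁ * Ω₂⁻¹) *
        (Matrix.diagonal fun n => (c₂ n : ℂ))⁻¹)ᴴ *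
      (Matrix.diagonal (fun n => (c₁ n : ℂ)) * (Ω₁ * Ω₂⁻¹) *
        (Matrix.diagonal fun n => (c₂ n : ℂ))⁻¹) = 1 ↔
    Ω₁ᴴ * Matrix.diagonal (fun n => ((c₁ n : ℂ)) ^ 2) * Ω₁ =
      Ω₂ᴴ * Matrix.diagonal (fun n => ((c₂ n : ℂ)) ^ 2) * Ω₂ :=
  unitary_iff_shared_metric_general N Ω₁ Ω₂ hΩ₂ c₁ c₂ hc₂
end

section
/- Let N and K be positive integers and let A₁, …, A_K be N×N complex matrices. Suppose that for each j there exist an invertible N×N complex matrix Ω_j and a diagonal matrix 𝔞_j with real, pairwise distinct diagonal entries such that Ω_j A_j Ω_j⁻¹ = 𝔞_j. Then there exists a positive-definite Hermitian N×N matrix Θ with A_jᴴ Θ = Θ A_j for all j = 1, …, K if and only if there exist functions d₁, …, d_K : Fin N → ℝ with d_j(n) > 0 for all j, n such that the matrices Ω_jᴴ · diag(d_j) · Ω_j are all equal (i.e., Ω_jᴴ diag(d_j) Ω_j = Ω₁ᴴ diag(d₁) Ω₁ for every j). -/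
/-!
Writing a candidate metric as `Θ = Ωᴴ M Ω`, the relation `Aᴴ Θ = Θ A` for `Ω A Ω⁻¹ = 𝔞` becomes
`𝔞 M = M 𝔞`, and `Θ` is positive definite iff `M` is. Because the real diagonal entries of `𝔞`
are distinct, `M` commutes with `𝔞` iff `M` is diagonal. So the metrics for a single `A_j` are
exactly the `Ω_jᴴ diag(d_j) Ω_j` with `d_j > 0`, and a shared metric is a common value of these.
-/

open scoped ComplexOrder
open Matrix

theorem IsUnit.star_mul_conj_eq_conj_mul_iff_commute {R : Type*} [Monoid R] [StarMul R]
    {Ω A D M : R} (hΩ : IsUnit Ω) (hD : IsSelfAdjoint D) (hA : Ω * A = D * Ω) :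
    star A * (star Ω * M * Ω) = star Ω * M * Ω * A ↔ Commute D M := by
  have hA' : star A * star Ω = star Ω * D := by rw [← star_mul, hA, star_mul, hD.star_eq]
  calc star A * (star Ω * M * Ω) = star Ω * M * Ω * A
      ↔ star Ω * (D * M) * Ω = star Ω * (M * D) * Ω := by
        simp only [← mul_assoc, hA']; simp only [mul_assoc, hA]
    _ ↔ Commute D M := by rw [hΩ.mul_left_inj, hΩ.star.mul_right_inj, commute_iff_eq]

namespace Matrix

variable {n : Type*} [DecidableEq n]

def IsQuasiHermitian [Fintype n] (A Θ : Matrix n n ℂ) : Prop :=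
  Θ.PosDef ∧ Aᴴ * Θ = Θ * A

theorem commute_diagonal_iff_eq_diagonal_diag [Fintype n] {R : Type*} [CommRing R]
    [NoZeroDivisors R] {v : n → R} (hv : Function.Injective v) {M : Matrix n n R} :
    Commute (diagonal v) M ↔ M = diagonal M.diag := by
  refine ⟨fun h => ?_, fun h => h ▸ commute_diagonal _ _⟩
  ext i k
  obtain rfl | hik := eq_or_ne i k
  · simp
  · have hentry : (v i - v k) * M i k = 0 := by
      have := congrFun (congrFun h i) k
      rw [diagonal_mul, mul_diagonal] at this
      rw [sub_mul, this, mul_comm, sub_self]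
    simpa [hik, sub_ne_zero.mpr (hv.ne hik)] using hentry

theorem exists_pos_real_diagonal_iff {M : Matrix n n ℂ} :
    (∃ d : n → ℝ, (∀ i, 0 < d i) ∧ M = diagonal fun i => (d i : ℂ)) ↔
      M.PosDef ∧ M = diagonal M.diag := by
  constructor
  · rintro ⟨d, hd, rfl⟩
    simp [Complex.zero_lt_real, hd]
  · rintro ⟨hM, hMdiag⟩
    have hpos : ∀ i, 0 < M i i := posDef_diagonal_iff.mp (hMdiag ▸ hM)
    refine ⟨fun i => (M i i).re, fun i => (Complex.pos_iff.mp (hpos i)).1, hMdiag.trans ?_⟩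
    congr 1
    ext i
    exact Complex.ext rfl (by simp [← (Complex.pos_iff.mp (hpos i)).2])

theorem isQuasiHermitian_iff_exists_pos_real_diagonal [Fintype n] {A Ω Θ : Matrix n n ℂ}
    (hΩ : IsUnit Ω) {a : n → ℝ} (ha : Function.Injective a)
    (hA : Ω * A = diagonal (fun i => (a i : ℂ)) * Ω) :
    IsQuasiHermitian A Θ ↔
      ∃ d : n → ℝ, (∀ i, 0 < d i) ∧ Θ = Ωᴴ * diagonal (fun i => (d i : ℂ)) * Ω := by
  have hD : IsSelfAdjoint (diagonal fun i => (a i : ℂ)) :=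
    (isHermitian_diagonal_of_self_adjoint _
      (Pi.isSelfAdjoint.mpr fun i => Complex.conj_ofReal _)).isSelfAdjoint
  obtain ⟨M, rfl⟩ : ∃ M, Θ = star Ω * M * Ω := by
    lift Ω to (Matrix n n ℂ)ˣ using hΩ
    refine ⟨star (↑Ω⁻¹ : Matrix n n ℂ) * Θ * (↑Ω⁻¹ : Matrix n n ℂ), ?_⟩
    rw [← mul_assoc, ← mul_assoc, ← star_mul, Units.inv_mul, star_one, one_mul,
      Units.inv_mul_cancel_right]
  simp only [IsQuasiHermitian, ← star_eq_conjTranspose, hΩ.posDef_star_left_conjugate_iff,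
    hΩ.star_mul_conj_eq_conj_mul_iff_commute hD hA,
    commute_diagonal_iff_eq_diagonal_diag (v := fun i => (a i : ℂ))
      (Complex.ofReal_injective.comp ha),
    hΩ.mul_left_inj, hΩ.star.mul_right_inj, exists_pos_real_diagonal_iff]

end Matrix

theorem multiplet_compatibility_iff_shared_rescaled_metric_general
    (N K : ℕ) (hK : 0 < K)
    (A Ω : Fin K → Matrix (Fin N) (Fin N) ℂ)
    (hΩ : ∀ j, IsUnit (Ω j)) (a : Fin K → Fin N → ℝ)
    (ha : ∀ j, Function.Injective (a j))
    (h : ∀ j, Ω j * A j * (Ω j)⁻¹ = Matrix.diagonal fun n => (a j n : ℂ)) :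
    (∃ Θ : Matrix (Fin N) (Fin N) ℂ, Θ.IsHermitian ∧ Θ.PosDef ∧
      ∀ j, (A j)ᴴ * Θ = Θ * A j) ↔
    (∃ d : Fin K → Fin N → ℝ, (∀ j n, 0 < d j n) ∧
      ∀ j, (Ω j)ᴴ * Matrix.diagonal (fun n => (d j n : ℂ)) * Ω j =
        (Ω ⟨0, hK⟩)ᴴ * Matrix.diagonal (fun n => (d ⟨0, hK⟩ n : ℂ)) * Ω ⟨0, hK⟩) := by
  have hA : ∀ j, Ω j * A j = diagonal (fun n => (a j n : ℂ)) * Ω j := fun j => by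
    rw [← h j, nonsing_inv_mul_cancel_right _ _ ((isUnit_iff_isUnit_det _).mp (hΩ j))]
  have key := fun j Θ =>
    isQuasiHermitian_iff_exists_pos_real_diagonal (Θ := Θ) (hΩ j) (ha j) (hA j)
  constructor
  · rintro ⟨Θ, -, hΘ, hΘA⟩
    choose d hd hdΘ using fun j => (key j Θ).mp ⟨hΘ, hΘA j⟩
    exact ⟨d, hd, fun j => (hdΘ j).symm.trans (hdΘ _)⟩
  · rintro ⟨d, hd, hdeq⟩
    have hΘ := fun j => (key j _).mpr ⟨d j, hd j, (hdeq j).symm⟩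
    exact ⟨_, (hΘ ⟨0, hK⟩).1.isHermitian, (hΘ ⟨0, hK⟩).1, fun j => (hΘ j).2⟩

/-- K-term generalization of Lemma 1: a K-tuple of candidates, each
diagonalizable with real non-degenerate spectrum, admits a shared
positive-definite Hermitian metric iff all the rescaled metrics
`Ω_jᴴ diag(d_j) Ω_j` can be made equal. -/
theorem multiplet_compatibility_iff_shared_rescaled_metric
    (N K : ℕ) (hN : 0 < N) (hK : 0 < K)
    (A Ω : Fin K → Matrix (Fin N) (Fin N) ℂ)
    (hΩ : ∀ j, IsUnit (Ω j)) (a : Fin K → Fin N → ℝ)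
    (ha : ∀ j, Function.Injective (a j))
    (h : ∀ j, Ω j * A j * (Ω j)⁻¹ = Matrix.diagonal fun n => (a j n : ℂ)) :
    (∃ Θ : Matrix (Fin N) (Fin N) ℂ, Θ.IsHermitian ∧ Θ.PosDef ∧
      ∀ j, (A j)ᴴ * Θ = Θ * A j) ↔
    (∃ d : Fin K → Fin N → ℝ, (∀ j n, 0 < d j n) ∧
      ∀ j, (Ω j)ᴴ * Matrix.diagonal (fun n => (d j n : ℂ)) * Ω j =
        (Ω ⟨0, hK⟩)ᴴ * Matrix.diagonal (fun n => (d ⟨0, hK⟩ n : ℂ)) * Ω ⟨0, hK⟩) :=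
  multiplet_compatibility_iff_shared_rescaled_metric_general N K hK A Ω hΩ a ha h
end

section
/- Let s be a real number with -1 < s < 1, let b = √(2 − 2s²), let B be the 3×3 real matrix with rows (-2, b, 0), (-b, 0, b), (0, -b, 2), let W be the 3×3 real matrix with rows (-2 + 2s², 2s + 1 + s², -2s + 1 + s²), (-2b, b(s+1), -b(s-1)), (-2 + 2s², 1 - s², 1 - s²), and let D = diag(0, -2s, 2s). Then B · W = W · D; that is, the columns of W are eigenvectors of B with eigenvalues 0, -2s, 2s respectively. -/
open Matrix

/-- The columns of the paper's explicit matrix `Ω₁ᴴ` (eq. (asyreQ)) are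
eigenvectors of `A₁ᴴ` (eq. (asyre)) with eigenvalues `0, -2s, 2s`:
`B W = W D`. -/
theorem asyre_eigenvectors (s : ℝ) (hs₁ : -1 < s) (hs₂ : s < 1) :
    (!![(-2 : ℂ), (Real.sqrt (2 - 2*s^2) : ℂ), 0;
        -(Real.sqrt (2 - 2*s^2) : ℂ), 0, (Real.sqrt (2 - 2*s^2) : ℂ);
        0, -(Real.sqrt (2 - 2*s^2) : ℂ), 2]) *
      (!![-2 + 2*(s : ℂ)^2, 2*(s : ℂ) + 1 + (s : ℂ)^2, -(2*(s : ℂ)) + 1 + (s : ℂ)^2;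
          -(2*(Real.sqrt (2 - 2*s^2) : ℂ)),
            (Real.sqrt (2 - 2*s^2) : ℂ) * ((s : ℂ) + 1),
            -((Real.sqrt (2 - 2*s^2) : ℂ) * ((s : ℂ) - 1));
          -2 + 2*(s : ℂ)^2, 1 - (s : ℂ)^2, 1 - (s : ℂ)^2]) =
    (!![-2 + 2*(s : ℂ)^2, 2*(s : ℂ) + 1 + (s : ℂ)^2, -(2*(s : ℂ)) + 1 + (s : ℂ)^2;
        -(2*(Real.sqrt (2 - 2*s^2) : ℂ)),
          (Real.sqrt (2 - 2*s^2) : ℂ) * ((s : ℂ) + 1),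
          -((Real.sqrt (2 - 2*s^2) : ℂ) * ((s : ℂ) - 1));
        -2 + 2*(s : ℂ)^2, 1 - (s : ℂ)^2, 1 - (s : ℂ)^2]) *
      Matrix.diagonal ![0, -(2*(s : ℂ)), 2*(s : ℂ)] := by
  have hb : ((Real.sqrt (2 - 2*s^2) : ℂ))^2 = 2 - 2*(s:ℂ)^2 := by
    have h : Real.sqrt (2 - 2*s^2) ^ 2 = 2 - 2*s^2 :=
      Real.sq_sqrt (by nlinarith)
    have := congrArg (Complex.ofReal) h
    push_cast at this
    exact this
  generalize hB : ((Real.sqrt (2 - 2*s^2) : ℝ) : ℂ) = b at hb ⊢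
  ext i j
  fin_cases i <;> fin_cases j <;>
    simp [Matrix.mul_apply, Matrix.diagonal, Fin.sum_univ_succ]
  all_goals (first
    | ring1
    | (linear_combination (-2 : ℂ) * hb)
    | (linear_combination ((s : ℂ) + 1) * hb)
    | (linear_combination (1 - (s : ℂ)) * hb)
    | (linear_combination (2 : ℂ) * hb)
    | (linear_combination (-((s : ℂ) + 1)) * hb)
    | (linear_combination ((s : ℂ) - 1) * hb))
end
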